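/- arXiv:2009.10961 — 2 statements merged into one kernel-verified Lean document; each statement's English description precedes it below -/
import Mathlib

section
/- Let Q = M_z + Σ_{j≥0} a_j·(d/dz)^j be an endomorphism of H = ℂ((z⁻¹)) with deg a_j ≤ −1 for all j. For a sequence (b_k)_{k≥0} in ℂ((z⁻¹)), let B : ℂ[z] → ℂ((z⁻¹)) be the map B·p := Σ_{k=0}^{deg p} b_k·p^{(k)}. If two sequences (b_k) and (b'_k) both satisfy the intertwining relation Q∘B = B∘M_z as maps from ℂ[z] to ℂ((z⁻¹)), and b_0 = b'_0, then b_k = b'_k for all k. (This is the uniqueness underlying the paper's Lemma that an operator B with B₀ = Ψ and Q_W·B = B·z must coincide with Sato's group element: the relation determines all higher coefficients recursively from the zeroth one.) -/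
noncomputable section

/-- `H = ℂ((z⁻¹))`: formal Laurent series in `u = z⁻¹`. -/
abbrev H : Type := LaurentSeries ℂ

/-- The coefficient of `z^k` of a Laurent series in `z⁻¹`. -/
def zc (f : H) (k : ℤ) : ℂ := f.coeff (-k)

/-- `deg_z f ≤ d`: all coefficients of `z^k` with `k > d` vanish. -/
def degLE (f : H) (d : ℤ) : Prop := ∀ k : ℤ, d < k → zc f k = 0

/-- The element `z` of `H`. -/
def zH : H := HahnSeries.single (-1 : ℤ) (1 : ℂ)

/-- Multiplication by `z` as a `ℂ`-linear endomorphism of `H`. -/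
def Mz : H →ₗ[ℂ] H where
  toFun f := zH * f
  map_add' f g := mul_add zH f g
  map_smul' c f := by
    simp only [RingHom.id_apply, ← HahnSeries.single_zero_mul_eq_smul]
    ring

/-- The derivative `d/dz` as a `ℂ`-linear endomorphism of `H`. -/
def Dz : H →ₗ[ℂ] H where
  toFun f :=
    { coeff := fun n => ((1 - n : ℤ) : ℂ) * f.coeff (n - 1)
      isPWO_support' := by
        refine Set.IsPWO.mono (Set.IsPWO.image_of_monotone f.isPWO_support'
          (f := fun m : ℤ => m + 1) (fun a b hab => by dsimp only; omega)) ?_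
        intro n hn
        simp only [Function.mem_support] at hn
        refine ⟨n - 1, ?_, by ring⟩
        intro h
        exact hn (by rw [h, mul_zero]) }
  map_add' f g := by
    ext n
    simp [HahnSeries.coeff_add, mul_add]
  map_smul' c f := by
    ext n
    simp [HahnSeries.coeff_smul]
    ring

/-- `H₊ = ℂ[z]`: series with no negative powers of `z`. -/
def Hplus : Submodule ℂ H where
  carrier := {f | ∀ k : ℤ, k < 0 → zc f k = 0}
  add_mem' := by
    intro f g hf hg k hk
    simp only [Set.mem_setOf_eq, zc, HahnSeries.coeff_add] at *
    rw [hf k hk, hg k hk, add_zero]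
  zero_mem' := by intro k hk; simp [zc]
  smul_mem' := by
    intro c f hf k hk
    simp only [Set.mem_setOf_eq, zc, HahnSeries.coeff_smul] at *
    rw [hf k hk, smul_zero]

/-- `H₋ = z⁻¹ℂ[[z⁻¹]]`: series with only negative powers of `z`. -/
def Hminus : Submodule ℂ H where
  carrier := {f | ∀ k : ℤ, 0 ≤ k → zc f k = 0}
  add_mem' := by
    intro f g hf hg k hk
    simp only [Set.mem_setOf_eq, zc, HahnSeries.coeff_add] at *
    rw [hf k hk, hg k hk, add_zero]
  zero_mem' := by intro k hk; simp [zc]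
  smul_mem' := by
    intro c f hf k hk
    simp only [Set.mem_setOf_eq, zc, HahnSeries.coeff_smul] at *
    rw [hf k hk, smul_zero]

/-- The projection `π₊ : H → H₊` discarding all negative powers of `z`. -/
def piPlus : H →ₗ[ℂ] H where
  toFun f :=
    { coeff := fun n => if 0 < n then 0 else f.coeff n
      isPWO_support' := by
        refine Set.IsPWO.mono f.isPWO_support' ?_
        intro n hn
        simp only [Function.mem_support] at hn
        by_cases h : 0 < n
        · exact absurd (if_pos h) hn
        · rw [if_neg h] at hn; exact hn }
  map_add' f g := by
    ext n
    by_cases h : 0 < n <;> simp [HahnSeries.coeff_add, h]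
  map_smul' c f := by
    ext n
    by_cases h : 0 < n <;> simp [HahnSeries.coeff_smul, h]

/-- The statement that `A` is the operator `Σ_{k≥0} a_k (d/dz)^k`, where all
`deg a_k ≤ e`: partial sums converge to `A f` coefficientwise. -/
def IsOp (a : ℕ → H) (e : ℤ) (A : H →ₗ[ℂ] H) : Prop :=
  (∀ k, degLE (a k) e) ∧
  ∀ (f : H) (d : ℤ), degLE f d → ∀ N : ℕ,
    degLE (A f - ∑ k ∈ Finset.range N, a k * ((Dz ^ k) f)) (d + e - N)

/-- The operator `A` stabilizes the subspace `W`. -/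
def Stab (A : H →ₗ[ℂ] H) (W : Submodule ℂ H) : Prop := ∀ f ∈ W, A f ∈ W

/-- The big cell of the Sato Grassmannian: `π₊` restricts to a bijection of `W` onto `ℂ[z]`. -/
def BigCell (W : Submodule ℂ H) : Prop :=
  Set.BijOn piPlus (W : Set H) (Hplus : Set H)

/-- The pair `(P, Q)` belongs to `Gr_𝒟`. -/
def GrD (P Q : H →ₗ[ℂ] H) : Prop :=
  (∃ a : ℕ → H, IsOp a (-2) (P - Dz)) ∧
  (∃ b : ℕ → H, IsOp b (-1) (Q - Mz)) ∧
  P ∘ₗ Q - Q ∘ₗ P = LinearMap.id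

/-!
The intertwining relation `Q ∘ B = B ∘ M_z` gives `B (z ^ (n + 1)) = Q (B (z ^ n))`, so `B` is
determined on all monomials by `B 1 = b_0`. On the other hand `B (z ^ n)` is `n! b_n` plus a
combination of `b_0, …, b_{n-1}`, so the values `B (z ^ n)` determine the `b_n` recursively.
-/

lemma zH_pow (n : ℕ) : zH ^ n = HahnSeries.single (-(n : ℤ)) 1 := by
  rw [zH, HahnSeries.single_pow, one_pow, nsmul_eq_mul, mul_neg_one]

lemma zH_pow_mem_Hplus (n : ℕ) : zH ^ n ∈ Hplus := by
  intro k hk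
  rw [zc, zH_pow, HahnSeries.coeff_single_of_ne (by omega)]

lemma Dz_single (m : ℤ) (c : ℂ) :
    Dz (HahnSeries.single m c) = HahnSeries.single (m + 1) (-(m : ℂ) * c) := by
  ext n
  simp only [Dz, LinearMap.coe_mk, AddHom.coe_mk, HahnSeries.coeff_single]
  by_cases h : n = m + 1
  · subst h
    simp only [add_sub_cancel_right, if_true, Int.cast_sub, Int.cast_add, Int.cast_one]
    ring
  · rw [if_neg (by omega), if_neg h, mul_zero]

lemma Dz_zH_pow (n : ℕ) : Dz (zH ^ n) = (n : ℂ) • zH ^ (n - 1) := by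
  rw [zH_pow, Dz_single]
  cases n with
  | zero =>
    simp only [CharP.cast_eq_zero, neg_zero, zero_add, Int.cast_zero, mul_one, map_zero,
      zero_tsub, pow_zero]
    exact (zero_smul ℂ (1 : H)).symm
  | succ n =>
    rw [Nat.add_sub_cancel, zH_pow, ← HahnSeries.single_zero_mul_eq_smul,
      HahnSeries.single_mul_single]
    congr 1
    · congr 1
      push_cast
      ring
    · push_cast
      ring

lemma Dz_pow_zH_pow (k n : ℕ) :
    (Dz ^ k) (zH ^ n) = (n.descFactorial k : ℂ) • zH ^ (n - k) := by
  induction k generalizing n with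
  | zero => simp
  | succ k ih =>
    have hdesc : n * (n - 1).descFactorial k = n.descFactorial (k + 1) := by
      cases n with
      | zero => simp
      | succ j => rw [Nat.succ_descFactorial_succ, Nat.add_sub_cancel]
    rw [pow_succ, Module.End.mul_apply, Dz_zH_pow, map_smul, ih, smul_smul, ← Nat.cast_mul,
      hdesc, Nat.sub_sub, Nat.add_comm 1 k]

lemma Dz_pow_succ_zH_pow_self (n : ℕ) : (Dz ^ (n + 1)) (zH ^ n) = 0 := by
  rw [Dz_pow_zH_pow, Nat.descFactorial_eq_zero_iff_lt.mpr n.lt_succ_self, Nat.cast_zero]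
  exact zero_smul ℂ (zH ^ (n - (n + 1)))

lemma coeff_eq_of_sum_Dz_pow_zH_pow_eq {b b' : ℕ → H}
    (h : ∀ n, ∑ k ∈ Finset.range (n + 1), b k * (Dz ^ k) (zH ^ n) =
      ∑ k ∈ Finset.range (n + 1), b' k * (Dz ^ k) (zH ^ n)) :
    ∀ n, b n = b' n := by
  intro n
  induction n using Nat.strong_induction_on with
  | _ n ih =>
    have hn := h n
    rw [Finset.sum_range_succ, Finset.sum_range_succ,
      Finset.sum_congr rfl fun k hk => by rw [ih k (Finset.mem_range.mp hk)]] at hn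
    have htop := add_left_cancel hn
    rw [Dz_pow_zH_pow, Nat.descFactorial_self, Nat.sub_self, pow_zero,
      ← HahnSeries.single_zero_mul_eq_smul, mul_one] at htop
    have hfact : (n.factorial : ℂ) ≠ 0 := Nat.cast_ne_zero.mpr n.factorial_ne_zero
    exact mul_right_cancel₀ (HahnSeries.single_ne_zero hfact) htop

lemma eq_on_zH_pow_of_intertwines {Q B B' : H → H}
    (hint : ∀ p ∈ Hplus, Q (B p) = B (zH * p)) (hint' : ∀ p ∈ Hplus, Q (B' p) = B' (zH * p))
    (h1 : B 1 = B' 1) (n : ℕ) : B (zH ^ n) = B' (zH ^ n) := by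
  induction n with
  | zero => simpa using h1
  | succ n ih =>
    rw [pow_succ', ← hint _ (zH_pow_mem_Hplus n), ← hint' _ (zH_pow_mem_Hplus n), ih]

theorem intertwiner_determined_by_b0_general
    (Q : H →ₗ[ℂ] H)
    (b b' : ℕ → H) (B B' : H → H)
    (hB : ∀ p ∈ Hplus, ∀ N : ℕ, (Dz ^ N) p = 0 →
      B p = ∑ k ∈ Finset.range N, b k * ((Dz ^ k) p))
    (hB' : ∀ p ∈ Hplus, ∀ N : ℕ, (Dz ^ N) p = 0 →
      B' p = ∑ k ∈ Finset.range N, b' k * ((Dz ^ k) p))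
    (hint : ∀ p ∈ Hplus, Q (B p) = B (zH * p))
    (hint' : ∀ p ∈ Hplus, Q (B' p) = B' (zH * p))
    (h0 : b 0 = b' 0) :
    ∀ k, b k = b' k := by
  have hB_pow n := hB _ (zH_pow_mem_Hplus n) _ (Dz_pow_succ_zH_pow_self n)
  have hB'_pow n := hB' _ (zH_pow_mem_Hplus n) _ (Dz_pow_succ_zH_pow_self n)
  have h1 : B 1 = B' 1 := by
    rw [← pow_zero zH, hB_pow, hB'_pow, Finset.sum_range_one, Finset.sum_range_one, h0]
  refine coeff_eq_of_sum_Dz_pow_zH_pow_eq fun n => ?_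
  rw [← hB_pow, ← hB'_pow]
  exact eq_on_zH_pow_of_intertwines hint hint' h1 n

/-- An operator `B = Σ b_k (d/dz)^k : ℂ[z] → ℂ((z⁻¹))` intertwining
`Q∘B = B∘M_z` is uniquely determined by its zeroth coefficient `b_0`. -/
theorem intertwiner_determined_by_b0
    (Q : H →ₗ[ℂ] H) (a : ℕ → H) (hQ : IsOp a (-1) (Q - Mz))
    (b b' : ℕ → H) (B B' : H → H)
    (hB : ∀ p ∈ Hplus, ∀ N : ℕ, (Dz ^ N) p = 0 →
      B p = ∑ k ∈ Finset.range N, b k * ((Dz ^ k) p))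
    (hB' : ∀ p ∈ Hplus, ∀ N : ℕ, (Dz ^ N) p = 0 →
      B' p = ∑ k ∈ Finset.range N, b' k * ((Dz ^ k) p))
    (hint : ∀ p ∈ Hplus, Q (B p) = B (zH * p))
    (hint' : ∀ p ∈ Hplus, Q (B' p) = B' (zH * p))
    (h0 : b 0 = b' 0) :
    ∀ k, b k = b' k :=
  intertwiner_determined_by_b0_general Q b b' B B' hB hB' hint hint' h0
end
end

section
/- Let Q = M_z + Σ_{j≥0} a_j·(d/dz)^j be an endomorphism of H = ℂ((z⁻¹)) with deg a_j ≤ −1 for all j. Then Q is a linear automorphism of H, and its inverse is again an operator of the same type with coefficients in H₋: there exist c_j ∈ z⁻¹ℂ[[z⁻¹]] (j ≥ 0), with c_0 ∈ z⁻¹ + z⁻²ℂ[[z⁻¹]], such that Q⁻¹·f = Σ_{j≥0} c_j·(d/dz)^j f for all f ∈ H. (The operator Q_W is invertible with inverse Q_W⁻¹ = z⁻¹ + ⋯ ∈ 𝒟₋.) -/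
noncomputable section

/-!
`Q = z + Σ_j a_j ∂^j` raises degrees by exactly one (the top coefficient of `Q f` is that of
`z f`), so `Q` is injective, and it suffices to find a right inverse of the form
`A = Σ_j c_j ∂^j` with `deg c_j ≤ -1`.

Such an operator is encoded by its symbols along the diagonals: `A z^w` has coefficient
`σ_u(w)` at `z^(w-u-1)`, where `σ_u = Σ_{j ≤ u} [z^(j-u-1)] c_j · x (x-1) ⋯ (x-j+1)` is a
polynomial of degree `≤ u`. Conversely, since the falling factorials form a basis of `ℂ[x]`,
every sequence of polynomials `σ_u` with `deg σ_u ≤ u` is the symbol of some `A`. Written in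
symbols, `Q ∘ A = 1` becomes the triangular recursion
`σ_u(x) = δ_{u,0} - Σ_{s < u-1} τ_{u-s-2}(x-s-1) σ_s(x)`, with `τ` the symbol of `Q - z`.
Its solution has `deg σ_u ≤ u`, so it defines `A`.
-/

open Finset Polynomial

lemma zc_injective : Function.Injective zc := fun f g h =>
  HahnSeries.ext <| funext fun n => by simpa [zc] using congrFun h (-n)

lemma zc_add (f g : H) (k : ℤ) : zc (f + g) k = zc f k + zc g k := rfl

lemma zc_sub (f g : H) (k : ℤ) : zc (f - g) k = zc f k - zc g k := rfl

lemma zc_smul (r : ℂ) (f : H) (k : ℤ) : zc (r • f) k = r * zc f k := rfl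

lemma zc_sum {ι : Type*} (s : Finset ι) (f : ι → H) (k : ℤ) :
    zc (∑ i ∈ s, f i) k = ∑ i ∈ s, zc (f i) k :=
  HahnSeries.coeff_sum _

lemma zc_Mz (f : H) (k : ℤ) : zc (Mz f) k = zc f (k - 1) := by
  change (zH * f).coeff (-k) = f.coeff (-(k - 1))
  rw [show -k = -(k - 1) + -1 by ring, zH, HahnSeries.coeff_single_mul_add, one_mul]

lemma zc_Dz (f : H) (k : ℤ) : zc (Dz f) k = (k + 1) * zc f (k + 1) := by
  change ((1 - -k : ℤ) : ℂ) * f.coeff (-k - 1) = _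
  rw [zc, show -(k + 1) = -k - 1 by ring]
  push_cast
  ring

lemma zc_Dz_pow (f : H) (j : ℕ) (k : ℤ) :
    zc ((Dz ^ j) f) k = (descPochhammer ℂ j).eval ((k + j : ℤ) : ℂ) * zc f (k + j) := by
  induction j generalizing k with
  | zero => simp
  | succ j ih =>
    rw [pow_succ', Module.End.mul_apply, zc_Dz, ih, descPochhammer_succ_eval]
    push_cast
    ring_nf

lemma zc_mul_eq_sum {f g : H} {k : ℤ} (s : Finset ℤ)
    (hs : ∀ p, zc f p ≠ 0 → zc g (k - p) ≠ 0 → p ∈ s) :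
    zc (f * g) k = ∑ p ∈ s, zc f p * zc g (k - p) := by
  rw [zc, HahnSeries.coeff_mul]
  refine Finset.sum_bij_ne_zero (fun ij _ _ => -ij.1) ?_ ?_ ?_ ?_
  · rintro ⟨i, j⟩ hij -
    simp only [Finset.mem_antidiagonal, HahnSeries.mem_support] at hij
    refine hs _ (by simpa [zc] using hij.1) ?_
    rw [zc, show -(k - -i) = j by omega]
    exact hij.2.1
  · rintro ⟨i, j⟩ hij - ⟨i', j'⟩ hij' - h
    simp only [Finset.mem_antidiagonal] at hij hij'
    simp only [neg_inj] at h
    ext <;> omega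
  · intro p _ hp
    refine ⟨(-p, p - k), ?_, ?_, by simp⟩
    · simp only [Finset.mem_antidiagonal, HahnSeries.mem_support]
      refine ⟨left_ne_zero_of_mul hp, ?_, by ring⟩
      simpa [zc] using right_ne_zero_of_mul hp
    · simpa [zc] using hp
  · rintro ⟨i, j⟩ hij -
    simp only [Finset.mem_antidiagonal] at hij
    rw [zc, zc, neg_neg, show -(k - -i) = j by omega]

lemma degLE.mono {f : H} {d d' : ℤ} (hf : degLE f d) (h : d ≤ d') : degLE f d' :=
  fun k hk => hf k (h.trans_lt hk)

lemma degLE.add {f g : H} {d : ℤ} (hf : degLE f d) (hg : degLE g d) : degLE (f + g) d :=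
  fun k hk => by rw [zc_add, hf k hk, hg k hk, add_zero]

lemma degLE.smul {f : H} {d : ℤ} (hf : degLE f d) (r : ℂ) : degLE (r • f) d :=
  fun k hk => by rw [zc_smul, hf k hk, mul_zero]

lemma degLE_neg_order (f : H) : degLE f (-f.order) := fun k hk =>
  HahnSeries.coeff_eq_zero_of_lt_order (by omega)

lemma zc_neg_order_ne_zero {f : H} (hf : f ≠ 0) : zc f (-f.order) ≠ 0 := by
  simpa [zc] using mt HahnSeries.coeff_order_eq_zero.1 hf

lemma degLE_mul {f g : H} {d e : ℤ} (hf : degLE f d) (hg : degLE g e) :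
    degLE (f * g) (d + e) := fun k hk => by
  rw [zc_mul_eq_sum ∅ fun p h1 h2 => ?_, sum_empty]
  exact absurd (hg _ (by by_contra! h; exact h1 (hf p (by omega)))) h2

lemma degLE_Dz_pow {f : H} {d : ℤ} (hf : degLE f d) (j : ℕ) : degLE ((Dz ^ j) f) (d - j) :=
  fun k hk => by rw [zc_Dz_pow, hf _ (by omega), mul_zero]

lemma degLE_mul_Dz_pow {b f : H} {e d : ℤ} (hb : degLE b e) (hf : degLE f d) (j : ℕ) :
    degLE (b * (Dz ^ j) f) (d + e - j) :=
  (degLE_mul hb (degLE_Dz_pow hf j)).mono (by omega)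

section Operator

variable {b : ℕ → H} {e : ℤ} {A : H →ₗ[ℂ] H} {f : H} {d : ℤ}

lemma IsOp.zc_apply_eq_sum (hA : IsOp b e A) (hf : degLE f d) {k : ℤ} {N : ℕ}
    (hN : d + e - k < N) :
    zc (A f) k = ∑ j ∈ range N, zc (b j * (Dz ^ j) f) k := by
  have := hA.2 f d hf N k (by omega)
  rwa [zc_sub, zc_sum, sub_eq_zero] at this

lemma IsOp.degLE_apply (hA : IsOp b e A) (hf : degLE f d) : degLE (A f) (d + e) := by
  simpa using hA.2 f d hf 0

def diffOpFamily (b : ℕ → H) (hb : ∀ j, degLE (b j) e) (f : H) :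
    HahnSeries.SummableFamily ℤ ℂ ℕ where
  toFun j := b j * (Dz ^ j) f
  isPWO_iUnion_support' := by
    refine (BddBelow.isWF ⟨f.order - e, ?_⟩).isPWO
    simp only [mem_lowerBounds, Set.mem_iUnion, HahnSeries.mem_support]
    rintro n ⟨j, hn⟩
    by_contra h
    exact hn (by simpa [zc] using degLE_mul_Dz_pow (hb j) (degLE_neg_order f) j (-n) (by omega))
  finite_co_support' n := (range (n - f.order + e + 1).toNat).finite_toSet.subset fun j hj => by
    simp only [Set.mem_ofPred_eq] at hj
    simp only [coe_range, Set.mem_Iio]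
    by_contra h
    exact hj (by simpa [zc] using degLE_mul_Dz_pow (hb j) (degLE_neg_order f) j (-n) (by omega))

lemma zc_hsum_diffOpFamily (hb : ∀ j, degLE (b j) e) (hf : degLE f d) {k : ℤ} {N : ℕ}
    (hN : d + e - k < N) :
    zc (diffOpFamily b hb f).hsum k = ∑ j ∈ range N, zc (b j * (Dz ^ j) f) k := by
  refine HahnSeries.SummableFamily.coeff_hsum_eq_sum_of_subset fun j hj => ?_
  simp only [Set.mem_ofPred_eq] at hj
  simp only [coe_range, Set.mem_Iio]
  by_contra h
  exact hj (degLE_mul_Dz_pow (hb j) hf j k (by omega))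

def diffOp (b : ℕ → H) (hb : ∀ j, degLE (b j) e) : H →ₗ[ℂ] H where
  toFun f := (diffOpFamily b hb f).hsum
  map_add' f g := zc_injective <| funext fun k => by
    have hf := (degLE_neg_order f).mono (le_max_left _ (-g.order))
    have hg := (degLE_neg_order g).mono (le_max_right (-f.order) _)
    have hN : max (-f.order) (-g.order) + e - k < (max (-f.order) (-g.order) + e - k + 1).toNat :=
      by omega
    rw [zc_add, zc_hsum_diffOpFamily hb (hf.add hg) hN, zc_hsum_diffOpFamily hb hf hN,
      zc_hsum_diffOpFamily hb hg hN, ← sum_add_distrib]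
    simp only [map_add, mul_add, zc_add]
  map_smul' r f := zc_injective <| funext fun k => by
    have hf := degLE_neg_order f
    have hN : -f.order + e - k < (-f.order + e - k + 1).toNat := by omega
    rw [RingHom.id_apply, zc_smul, zc_hsum_diffOpFamily hb (hf.smul r) hN,
      zc_hsum_diffOpFamily hb hf hN, mul_sum]
    refine sum_congr rfl fun j _ => ?_
    rw [map_smul, ← HahnSeries.C_mul_eq_smul, mul_left_comm, HahnSeries.C_mul_eq_smul, zc_smul]

lemma isOp_diffOp (hb : ∀ j, degLE (b j) e) : IsOp b e (diffOp b hb) := by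
  refine ⟨hb, fun f d hf N k hk => ?_⟩
  change zc ((diffOpFamily b hb f).hsum - _) k = 0
  rw [zc_sub, zc_sum, sub_eq_zero,
    zc_hsum_diffOpFamily hb hf (N := max N (d + e - k + 1).toNat) (by omega)]
  refine (sum_subset (range_subset_range.2 (le_max_left _ _)) fun j _ hj => ?_).symm
  simp only [mem_range, not_lt] at hj
  exact degLE_mul_Dz_pow (hb j) hf j k (by omega)

end Operator

/-- `(diagPoly b u).eval w` is the coefficient of `z^(w-u-1)` in `Σ_j b_j (d/dz)^j z^w`. -/
def diagPoly (b : ℕ → H) (u : ℕ) : ℂ[X] :=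
  ∑ j ∈ range (u + 1), zc (b j) (j - u - 1) • descPochhammer ℂ j

lemma natDegree_diagPoly_le (b : ℕ → H) (u : ℕ) : (diagPoly b u).natDegree ≤ u :=
  natDegree_sum_le_of_forall_le _ _ fun j hj =>
    (natDegree_smul_le _ _).trans (by simpa [Nat.lt_succ_iff] using hj)

lemma eval_diagPoly (b : ℕ → H) (u : ℕ) (x : ℂ) :
    (diagPoly b u).eval x =
      ∑ j ∈ range (u + 1), zc (b j) (j - u - 1) * (descPochhammer ℂ j).eval x := by
  simp [diagPoly, eval_finsetSum]

lemma zc_mul_Dz_pow {b f : H} {d : ℤ} (hb : degLE b (-1)) (hf : degLE f d) (j : ℕ) (k : ℤ) :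
    zc (b * (Dz ^ j) f) k =
      ∑ w ∈ Ioc k d, zc b (k - w + j) * (descPochhammer ℂ j).eval (w : ℂ) * zc f w := by
  rw [zc_mul_eq_sum ((Ioc k d).image fun w => k - w + j) fun p hp hq => ?_,
    sum_image fun w _ w' _ h => by simpa using h]
  · refine sum_congr rfl fun w _ => ?_
    rw [zc_Dz_pow, show k - (k - w + j) + j = w by ring, mul_assoc]
  · rw [zc_Dz_pow] at hq
    have h1 : p ≤ -1 := by by_contra h; exact hp (hb p (by omega))
    have h2 : k - p + j ≤ d := by by_contra h; exact hq (by rw [hf _ (by omega), mul_zero])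
    exact mem_image.2 ⟨k - p + j, mem_Ioc.2 ⟨by omega, h2⟩, by ring⟩

lemma IsOp.zc_apply_eq_sum_diagPoly {b : ℕ → H} {A : H →ₗ[ℂ] H} (hA : IsOp b (-1) A)
    {f : H} {d : ℤ} (hf : degLE f d) (k : ℤ) :
    zc (A f) k = ∑ w ∈ Ioc k d, (diagPoly b (w - k - 1).toNat).eval (w : ℂ) * zc f w := by
  rw [hA.zc_apply_eq_sum hf (N := (d - k).toNat) (by omega)]
  simp_rw [zc_mul_Dz_pow (hA.1 _) hf]
  rw [sum_comm]
  refine sum_congr rfl fun w hw => ?_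
  rw [mem_Ioc] at hw
  rw [← sum_mul, eval_diagPoly]
  congr 1
  refine (sum_subset (range_subset_range.2 (by omega)) fun j _ hj => ?_).symm.trans
    (sum_congr rfl fun j _ => ?_)
  · simp only [mem_range, not_lt] at hj
    rw [hA.1 j _ (by omega), zero_mul]
  · rw [show (j : ℤ) - (w - k - 1).toNat - 1 = k - w + j by omega]

lemma zc_apply_eq_zc_sub_one_add (Q : H →ₗ[ℂ] H) (g : H) (k : ℤ) :
    zc (Q g) k = zc g (k - 1) + zc ((Q - Mz) g) k := by
  rw [LinearMap.sub_apply, zc_sub, zc_Mz, add_sub_cancel]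

lemma zc_apply_apply_eq_sum_diagPoly {Q A : H →ₗ[ℂ] H} {a c : ℕ → H}
    (hQ : IsOp a (-1) (Q - Mz)) (hA : IsOp c (-1) A) {f : H} {d : ℤ} (hf : degLE f d) (k : ℤ) :
    zc (Q (A f)) k = ∑ w ∈ Icc k d, ((diagPoly c (w - k).toNat).eval (w : ℂ) +
      ∑ m ∈ Ioo k w, (diagPoly a (m - k - 1).toNat).eval (m : ℂ) *
        (diagPoly c (w - m - 1).toNat).eval (w : ℂ)) * zc f w := by
  have hAf : degLE (A f) (d - 1) := by simpa [sub_eq_add_neg] using hA.degLE_apply hf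
  rw [zc_apply_eq_zc_sub_one_add, hQ.zc_apply_eq_sum_diagPoly hAf,
    hA.zc_apply_eq_sum_diagPoly hf, show Ioc (k - 1) d = Icc k d by ext; simp]
  simp_rw [hA.zc_apply_eq_sum_diagPoly hf, mul_sum]
  rw [sum_comm' (t' := Icc k d) (s' := fun w => Ioo k w)
    (fun m w => by simp only [mem_Ioc, mem_Icc, mem_Ioo]; omega), ← sum_add_distrib]
  refine sum_congr rfl fun w _ => ?_
  rw [add_mul, sum_mul, show w - (k - 1) - 1 = w - k by ring]
  congr 1
  exact sum_congr rfl fun m _ => by ring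

def descPochhammerSeq (R : Type*) [CommRing R] [IsDomain R] : Polynomial.Sequence R where
  elems' := descPochhammer R
  degree_eq' i := by
    rw [degree_eq_natDegree (monic_descPochhammer R i).ne_zero, descPochhammer_natDegree]

lemma exists_sum_smul_descPochhammer {R : Type*} [CommRing R] [IsDomain R] {p : R[X]} {u : ℕ}
    (hp : p.natDegree ≤ u) :
    ∃ α : ℕ → R, ∑ j ∈ range (u + 1), α j • descPochhammer R j = p := by
  have hspan := (descPochhammerSeq R).span_degreeLT (m := u + 1)
    fun i _ => by simp [descPochhammerSeq, (monic_descPochhammer R i).leadingCoeff]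
  have hmem : p ∈ Submodule.span R (descPochhammer R '' ↑(range (u + 1))) := by
    rw [coe_range]
    refine hspan ▸ mem_degreeLT.2 (degree_le_natDegree.trans_lt ?_)
    exact_mod_cast Nat.lt_succ_of_le hp
  exact (Submodule.mem_span_image_finset_iff_exists_fun' R).1 hmem

def invDiagPoly (a : ℕ → H) : ℕ → ℂ[X]
  | 0 => 1
  | u + 1 => -∑ s : Fin u, (diagPoly a (u - 1 - s)).comp (X - C ((s : ℂ) + 1)) * invDiagPoly a s

lemma natDegree_invDiagPoly_le (a : ℕ → H) (u : ℕ) : (invDiagPoly a u).natDegree ≤ u := by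
  induction u using Nat.strong_induction_on with
  | _ u ih =>
    match u with
    | 0 => simp [invDiagPoly]
    | u + 1 =>
      rw [invDiagPoly, natDegree_neg]
      refine natDegree_sum_le_of_forall_le _ _ fun s _ => natDegree_mul_le.trans ?_
      have h1 :
          ((diagPoly a (u - 1 - s)).comp (X - C ((s : ℂ) + 1))).natDegree ≤ u - 1 - s := by
        refine natDegree_comp_le.trans ?_
        rw [natDegree_X_sub_C, mul_one]
        exact natDegree_diagPoly_le a _
      have h2 := ih s (by omega)
      omega

lemma eval_invDiagPoly_add_sum (a : ℕ → H) {k w : ℤ} (hkw : k ≤ w) :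
    (invDiagPoly a (w - k).toNat).eval (w : ℂ) +
      ∑ m ∈ Ioo k w, (diagPoly a (m - k - 1).toNat).eval (m : ℂ) *
        (invDiagPoly a (w - m - 1).toNat).eval (w : ℂ) = if w = k then 1 else 0 := by
  obtain ⟨u, rfl⟩ : ∃ u : ℕ, w = k + u := ⟨(w - k).toNat, by omega⟩
  rw [add_sub_cancel_left, Int.toNat_natCast]
  cases u with
  | zero => simp [invDiagPoly]
  | succ u =>
    rw [if_neg (by omega), invDiagPoly, eval_neg, neg_add_eq_zero, eval_finsetSum]
    simp only [eval_mul, eval_comp, eval_sub, eval_X, eval_C]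
    rw [Fin.sum_univ_eq_sum_range (fun s => (diagPoly a (u - 1 - s)).eval
      (((k + (u + 1 : ℕ) : ℤ) : ℂ) - ((s : ℂ) + 1)) *
        (invDiagPoly a s).eval ((k + (u + 1 : ℕ) : ℤ) : ℂ))]
    refine sum_nbij' (fun s => k + u - s) (fun m => (k + u - m).toNat) ?_ ?_ ?_ ?_ ?_
    · intro s hs; simp only [mem_range, mem_Ioo] at hs ⊢; omega
    · intro m hm; simp only [mem_range, mem_Ioo] at hm ⊢; omega
    · intro s hs; simp only [mem_range] at hs; omega
    · intro m hm; simp only [mem_Ioo] at hm; omega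
    · intro s hs
      simp only [mem_range] at hs
      rw [show (k + u - s - k - 1).toNat = u - 1 - s by omega,
        show (k + (u + 1 : ℕ) - (k + u - s) - 1).toNat = s by omega]
      push_cast
      ring_nf

def invDiagCoeff (a : ℕ → H) (u : ℕ) : ℕ → ℂ :=
  (exists_sum_smul_descPochhammer (natDegree_invDiagPoly_le a u)).choose

def invCoeffs (a : ℕ → H) (j : ℕ) : H :=
  HahnSeries.ofSuppBddBelow (fun n => if 0 < n then invDiagCoeff a (j + n - 1).toNat j else 0)
    ⟨1, fun n hn => by by_contra h; exact hn (if_neg (by omega))⟩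

lemma zc_invCoeffs (a : ℕ → H) (j : ℕ) (s : ℤ) :
    zc (invCoeffs a j) s = if s ≤ -1 then invDiagCoeff a (j - s - 1).toNat j else 0 := by
  change (if 0 < -s then _ else _) = _
  rw [show (j : ℤ) + -s - 1 = j - s - 1 by ring]
  exact if_congr (by omega) rfl rfl

lemma degLE_invCoeffs (a : ℕ → H) (j : ℕ) : degLE (invCoeffs a j) (-1) := fun s hs => by
  rw [zc_invCoeffs, if_neg (by omega)]

lemma diagPoly_invCoeffs (a : ℕ → H) (u : ℕ) :
    diagPoly (invCoeffs a) u = invDiagPoly a u := by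
  rw [diagPoly, ← (exists_sum_smul_descPochhammer (natDegree_invDiagPoly_le a u)).choose_spec]
  refine sum_congr rfl fun j hj => ?_
  rw [mem_range] at hj
  rw [zc_invCoeffs, if_pos (by omega), show ((j : ℤ) - (j - u - 1) - 1).toNat = u by omega]
  rfl

lemma zc_invCoeffs_zero_neg_one (a : ℕ → H) : zc (invCoeffs a 0) (-1) = 1 :=
  C_inj.1 (by simpa [diagPoly, invDiagPoly, smul_eq_C_mul] using diagPoly_invCoeffs a 0)

lemma apply_diffOp_invCoeffs {Q : H →ₗ[ℂ] H} {a : ℕ → H} (hQ : IsOp a (-1) (Q - Mz))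
    (f : H) :
    Q (diffOp (invCoeffs a) (degLE_invCoeffs a) f) = f := by
  refine zc_injective (funext fun k => ?_)
  have hf := degLE_neg_order f
  rw [zc_apply_apply_eq_sum_diagPoly hQ (isOp_diffOp _) hf]
  simp_rw [diagPoly_invCoeffs]
  rw [sum_congr rfl fun w hw => by rw [eval_invDiagPoly_add_sum a (mem_Icc.1 hw).1]]
  simp only [ite_mul, one_mul, zero_mul, sum_ite_eq', mem_Icc, le_refl, true_and]
  split_ifs with hk
  · rfl
  · exact (hf k (by omega)).symm

lemma zc_apply_add_one {Q : H →ₗ[ℂ] H} {a : ℕ → H} (hQ : IsOp a (-1) (Q - Mz)) {f : H}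
    {d : ℤ} (hf : degLE f d) : zc (Q f) (d + 1) = zc f d := by
  rw [zc_apply_eq_zc_sub_one_add, add_sub_cancel_right, hQ.degLE_apply hf _ (by omega), add_zero]

lemma injective_of_isOp_sub_Mz {Q : H →ₗ[ℂ] H} {a : ℕ → H} (hQ : IsOp a (-1) (Q - Mz)) :
    Function.Injective Q := by
  refine (injective_iff_map_eq_zero Q).2 fun f hQf => ?_
  by_contra hf
  refine zc_neg_order_ne_zero hf ?_
  rw [← zc_apply_add_one hQ (degLE_neg_order f), hQf]
  rfl

/-- The operator `Q = M_z + Σ a_j (d/dz)^j` with `deg a_j ≤ -1` is a linear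
automorphism of `H`, and its inverse is again such an operator, with coefficients
`c_j ∈ z⁻¹ℂ[[z⁻¹]]` and `c_0 ∈ z⁻¹ + z⁻²ℂ[[z⁻¹]]`. -/
theorem Q_invertible (Q : H →ₗ[ℂ] H) (a : ℕ → H) (hQ : IsOp a (-1) (Q - Mz)) :
    Function.Bijective Q ∧
    ∃ (c : ℕ → H) (Qinv : H →ₗ[ℂ] H),
      (∀ j, degLE (c j) (-1)) ∧ zc (c 0) (-1) = 1 ∧
      IsOp c (-1) Qinv ∧
      Qinv ∘ₗ Q = LinearMap.id ∧ Q ∘ₗ Qinv = LinearMap.id := by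
  have hinj := injective_of_isOp_sub_Mz hQ
  have hright := apply_diffOp_invCoeffs hQ
  refine ⟨⟨hinj, fun f => ⟨_, hright f⟩⟩, invCoeffs a, diffOp _ (degLE_invCoeffs a),
    degLE_invCoeffs a, zc_invCoeffs_zero_neg_one a, isOp_diffOp _, ?_, LinearMap.ext hright⟩
  exact LinearMap.ext fun f => hinj (hright (Q f))
end
end
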